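/- For all positive integers r and ℓ, every 2-factor of the papillon graph P_{r,ℓ} contains only cycles of even length; that is, every papillon graph is E2F. -/

import Mathlib

/-!
Every 2-factor `F` of `P_{r,ℓ}` contains a perfect matching, and a perfect matching inside `F`
forces every cycle of `F` to be even.

The spokes `u_i v_i` and the rungs `u_{2i-1} u_{2i}`, `v_{2i-1} v_{2i}` cover the vertices by
4-cycles, and the remaining edges form a perfect matching `M`. A vertex at which `F` omits its
`M`-edge keeps both of its square edges; a count at the opposite corner shows that within each
square these vertices come in adjacent pairs. Matching them along square edges, and all other
vertices along `M`, gives a perfect matching inside `F`.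
-/

open SimpleGraph

/-- Vertices of the papillon graph `P_{r,ℓ}`: `(false, i)` is the outer vertex `u_i`
and `(true, i)` is the inner vertex `v_i`, where indices are taken in `ZMod (2(r+ℓ))`
(so the 1-based index `i ∈ {1, …, 2(r+ℓ)}` corresponds to `i mod 2(r+ℓ)`). -/
abbrev PapVert (N : ℕ) : Type := Bool × ZMod N

/-- The outer vertex `u_i` (1-based index `i`). -/
def pu (N : ℕ) (i : ℕ) : PapVert N := (false, (i : ZMod N))

/-- The inner vertex `v_i` (1-based index `i`). -/
def pv (N : ℕ) (i : ℕ) : PapVert N := (true, (i : ZMod N))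

/-- The edge set of the papillon graph `P_{r,ℓ}`: the outer-cycle edges, the spokes,
and the inner-cycle edges. -/
def papillonEdges (r l : ℕ) : Set (Sym2 (PapVert (2 * (r + l)))) :=
  {e | (∃ i, 1 ≤ i ∧ i ≤ 2 * (r + l) - 1 ∧
          e = s(pu (2 * (r + l)) i, pu (2 * (r + l)) (i + 1)))
      ∨ e = s(pu (2 * (r + l)) (2 * (r + l)), pu (2 * (r + l)) 1)
      ∨ (∃ i, 1 ≤ i ∧ i ≤ 2 * (r + l) ∧
          e = s(pu (2 * (r + l)) i, pv (2 * (r + l)) i))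
      ∨ (∃ i, 1 ≤ i ∧ i ≤ r + l ∧
          e = s(pv (2 * (r + l)) (2 * i - 1), pv (2 * (r + l)) (2 * i)))
      ∨ (∃ i, 1 ≤ i ∧ i ≤ r + l - 1 ∧ i ≠ min r l ∧
          e = s(pv (2 * (r + l)) (2 * i - 1), pv (2 * (r + l)) (2 * i + 2)))
      ∨ e = s(pv (2 * (r + l)) 2, pv (2 * (r + l)) (2 * min r l + 2))
      ∨ e = s(pv (2 * (r + l)) (2 * min r l - 1), pv (2 * (r + l)) (2 * (r + l) - 1))}

/-- The papillon graph `P_{r,ℓ}`. -/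
def papillon (r l : ℕ) : SimpleGraph (PapVert (2 * (r + l))) :=
  SimpleGraph.fromEdgeSet (papillonEdges r l)

/-- `M` is a perfect matching of `G`, viewed as a set of edges: every vertex lies on
exactly one edge of `M`. -/
def IsPerfMatching {V : Type*} (G : SimpleGraph V) (M : Set (Sym2 V)) : Prop :=
  M ⊆ G.edgeSet ∧ ∀ v : V, ∃! e, e ∈ M ∧ v ∈ e

/-- `F` is (the edge set of) a 2-factor of `G`: a spanning subgraph in which every
vertex is incident with exactly two edges of `F`. -/
def Is2Factor {V : Type*} (G : SimpleGraph V) (F : Set (Sym2 V)) : Prop :=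
  F ⊆ G.edgeSet ∧ ∀ v : V, ∃ e₁ e₂, e₁ ≠ e₂ ∧ e₁ ∈ F ∧ e₂ ∈ F ∧ v ∈ e₁ ∧ v ∈ e₂ ∧
    ∀ e ∈ F, v ∈ e → e = e₁ ∨ e = e₂

/-- Every cycle of `G` all of whose edges lie in `F` has even length. -/
def HasOnlyEvenCycles {V : Type*} (G : SimpleGraph V) (F : Set (Sym2 V)) : Prop :=
  ∀ (x : V) (c : G.Walk x x), c.IsCycle → (∀ e ∈ c.edges, e ∈ F) → Even c.length

/-- `G` is even-2-factorable: every 2-factor of `G` contains only even cycles. -/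
def IsE2F {V : Type*} (G : SimpleGraph V) : Prop :=
  ∀ F, Is2Factor G F → HasOnlyEvenCycles G F

/-- `S` is the edge set of a Hamiltonian cycle of `G`. -/
def IsHamCycleSet {V : Type*} [DecidableEq V] (G : SimpleGraph V) (S : Set (Sym2 V)) : Prop :=
  ∃ (x : V) (c : G.Walk x x), c.IsHamiltonianCycle ∧ S = {e | e ∈ c.edges}

/-- `G` has the Perfect-Matching-Hamiltonian property. -/
def HasPMH {V : Type*} [DecidableEq V] (G : SimpleGraph V) : Prop :=
  ∀ M, IsPerfMatching G M → ∃ N, IsPerfMatching G N ∧ IsHamCycleSet G (M ∪ N)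

open Function

theorem Finset.even_card_of_involutive {α : Type*} {s : Finset α} {g : α → α}
    (hg : Involutive g) (hne : ∀ a ∈ s, g a ≠ a) (hmem : ∀ a ∈ s, g a ∈ s) :
    Even s.card := by
  have h : ∑ _a ∈ s, (1 : ZMod 2) = 0 :=
    Finset.sum_involution (fun a _ => g a) (fun _ _ => by decide) (fun a ha _ => hne a ha) hmem
      (fun a _ => hg a)
  simpa [ZMod.natCast_eq_zero_iff_even] using h

namespace SimpleGraph.Walk

variable {V : Type*} {G : SimpleGraph V}

lemma IsCycle.exists_ne_mk_mem_edges [DecidableEq V] {x v : V} {c : G.Walk x x}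
    (hc : c.IsCycle) (hv : v ∈ c.support) :
    ∃ a b, a ≠ b ∧ s(v, a) ∈ c.edges ∧ s(v, b) ∈ c.edges := by
  have hc' := hc.rotate hv
  refine ⟨(c.rotate v hv).snd, (c.rotate v hv).penultimate, hc'.snd_ne_penultimate,
    (c.rotate_edges v hv).mem_iff.mp (mk_start_snd_mem_edges hc'.not_nil), ?_⟩
  rw [Sym2.eq_swap]
  exact (c.rotate_edges v hv).mem_iff.mp (mk_penultimate_end_mem_edges hc'.not_nil)

lemma IsCycle.card_toFinset_tail_support [DecidableEq V] {x : V} {c : G.Walk x x}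
    (hc : c.IsCycle) : c.support.tail.toFinset.card = c.length := by
  rw [List.toFinset_card_of_nodup hc.support_nodup, List.length_tail, length_support]
  rfl

end SimpleGraph.Walk

namespace Is2Factor

variable {V : Type*} {G : SimpleGraph V} {F : Set (Sym2 V)}

lemma mem_edges_of_mem (hF : Is2Factor G F) {x v : V} {c : G.Walk x x} (hc : c.IsCycle)
    (hcF : ∀ e ∈ c.edges, e ∈ F) (hv : v ∈ c.support) {e : Sym2 V} (he : e ∈ F) (hve : v ∈ e) :
    e ∈ c.edges := by
  classical
  obtain ⟨a, b, hab, ha, hb⟩ := hc.exists_ne_mk_mem_edges hv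
  obtain ⟨e₁, e₂, -, -, -, -, -, hmax⟩ := hF.2 v
  have hab' : s(v, a) ≠ s(v, b) := fun h => hab (Sym2.congr_right.mp h)
  have h₁ := hmax _ (hcF _ ha) (Sym2.mem_mk_left _ _)
  have h₂ := hmax _ (hcF _ hb) (Sym2.mem_mk_left _ _)
  rcases hmax e he hve with rfl | rfl <;> grind

lemma notMem_iff (hF : Is2Factor G F) {v a b c : V} (hab : a ≠ b) (hac : a ≠ c) (hbc : b ≠ c)
    (hadj : ∀ w, G.Adj v w → w = a ∨ w = b ∨ w = c) :
    s(v, a) ∉ F ↔ s(v, b) ∈ F ∧ s(v, c) ∈ F := by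
  obtain ⟨e₁, e₂, h12, he₁, he₂, hv₁, hv₂, hmax⟩ := hF.2 v
  have hcases : ∀ e ∈ F, v ∈ e → e = s(v, a) ∨ e = s(v, b) ∨ e = s(v, c) := by
    intro e he hve
    obtain ⟨w, rfl⟩ := Sym2.mem_iff_exists.mp hve
    rcases hadj w (hF.1 he) with rfl | rfl | rfl <;> simp
  have hab' : s(v, a) ≠ s(v, b) := fun h => hab (Sym2.congr_right.mp h)
  have hac' : s(v, a) ≠ s(v, c) := fun h => hac (Sym2.congr_right.mp h)
  have hbc' : s(v, b) ≠ s(v, c) := fun h => hbc (Sym2.congr_right.mp h)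
  constructor
  · intro ha
    rcases hcases e₁ he₁ hv₁ with rfl | rfl | rfl <;>
      rcases hcases e₂ he₂ hv₂ with rfl | rfl | rfl <;> simp_all
  · rintro ⟨hb, hc⟩ ha
    rcases hmax _ ha (Sym2.mem_mk_left _ _) with h₁ | h₁ <;>
      rcases hmax _ hb (Sym2.mem_mk_left _ _) with h₂ | h₂ <;>
      rcases hmax _ hc (Sym2.mem_mk_left _ _) with h₃ | h₃ <;> simp_all

lemma hasOnlyEvenCycles_of_involutive (hF : Is2Factor G F) {ν : V → V} (hν : Involutive ν)
    (hνF : ∀ v, s(v, ν v) ∈ F) : HasOnlyEvenCycles G F := by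
  classical
  intro x c hc hcF
  have hsupp : ∀ v, v ∈ c.support.tail ↔ v ∈ c.support := fun v =>
    ⟨List.mem_of_mem_tail, fun hv => (c.mem_support_iff.mp hv).elim
      (fun h => h ▸ c.end_mem_tail_support hc.not_nil) id⟩
  rw [← hc.card_toFinset_tail_support]
  refine Finset.even_card_of_involutive hν (fun v _ hv => ?_) (fun v hv => ?_)
  · exact (hF.1 (hνF v) : G.Adj v (ν v)).ne hv.symm
  · rw [List.mem_toFinset, hsupp] at hv ⊢
    exact c.snd_mem_support_of_mem_edges
      (hF.mem_edges_of_mem hc hcF hv (hνF v) (Sym2.mem_mk_left _ _))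

end Is2Factor

/-- Every edge of `G` lies on one of the 4-cycles `v, σ v, σ (τ v), τ v` or on the perfect
matching `μ`. -/
structure IsSquaresAndMatching {V : Type*} (G : SimpleGraph V) (σ τ μ : V → V) : Prop where
  involutive_left : Involutive σ
  involutive_right : Involutive τ
  involutive_matching : Involutive μ
  commute : Function.Commute σ τ
  adj : ∀ v w, G.Adj v w → w = σ v ∨ w = τ v ∨ w = μ v
  left_ne_right : ∀ v, σ v ≠ τ v
  left_ne_matching : ∀ v, σ v ≠ μ v
  right_ne_matching : ∀ v, τ v ≠ μ v

namespace IsSquaresAndMatching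

variable {V : Type*} {G : SimpleGraph V} {σ τ μ : V → V} {F : Set (Sym2 V)}

lemma notMem_matching_iff (hG : IsSquaresAndMatching G σ τ μ) (hF : Is2Factor G F) (v : V) :
    s(v, μ v) ∉ F ↔ s(v, σ v) ∈ F ∧ s(v, τ v) ∈ F :=
  hF.notMem_iff (hG.left_ne_matching v).symm (hG.right_ne_matching v).symm (hG.left_ne_right v)
    fun w hw => by have := hG.adj v w hw; tauto

lemma notMem_left_iff (hG : IsSquaresAndMatching G σ τ μ) (hF : Is2Factor G F) (v : V) :
    s(v, σ v) ∉ F ↔ s(v, τ v) ∈ F ∧ s(v, μ v) ∈ F :=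
  hF.notMem_iff (hG.left_ne_right v) (hG.left_ne_matching v) (hG.right_ne_matching v) (hG.adj v)

lemma notMem_right_iff (hG : IsSquaresAndMatching G σ τ μ) (hF : Is2Factor G F) (v : V) :
    s(v, τ v) ∉ F ↔ s(v, σ v) ∈ F ∧ s(v, μ v) ∈ F :=
  hF.notMem_iff (hG.left_ne_right v).symm (hG.right_ne_matching v) (hG.left_ne_matching v)
    fun w hw => by have := hG.adj v w hw; tauto

lemma right_apply_corner (hG : IsSquaresAndMatching G σ τ μ) (v : V) : τ (σ (τ v)) = σ v := by
  rw [hG.commute.eq, hG.involutive_right]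

/-- If `v` is not matched in `F`, one of its square neighbours is not matched either: otherwise the
opposite corner `σ (τ v)` would miss both of its square edges. -/
lemma notMem_matching_left_or_right (hG : IsSquaresAndMatching G σ τ μ) (hF : Is2Factor G F)
    {v : V} (hv : s(v, μ v) ∉ F) : s(σ v, μ (σ v)) ∉ F ∨ s(τ v, μ (τ v)) ∉ F := by
  by_contra! h
  obtain ⟨hvσ, hvτ⟩ := (hG.notMem_matching_iff hF v).mp hv
  have hσ : s(σ v, τ (σ v)) ∉ F := (hG.notMem_right_iff hF _).mpr
    ⟨by rwa [hG.involutive_left v, Sym2.eq_swap], h.1⟩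
  have hτ : s(τ v, σ (τ v)) ∉ F := (hG.notMem_left_iff hF _).mpr
    ⟨by rwa [hG.involutive_right v, Sym2.eq_swap], h.2⟩
  have hcorner := (hG.notMem_left_iff hF (σ (τ v))).mp
  rw [hG.involutive_left, hG.right_apply_corner, Sym2.eq_swap (b := τ v),
    Sym2.eq_swap (b := σ v), hG.commute.eq] at hcorner
  exact hσ (hcorner (by rwa [← hG.commute.eq])).1

lemma notMem_matching_corner (hG : IsSquaresAndMatching G σ τ μ) (hF : Is2Factor G F) {v : V}
    (hσ : s(σ v, μ (σ v)) ∉ F) (hτ : s(τ v, μ (τ v)) ∉ F) : s(σ (τ v), μ (σ (τ v))) ∉ F := by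
  refine (hG.notMem_matching_iff hF _).mpr ⟨?_, ?_⟩
  · rw [hG.involutive_left, Sym2.eq_swap]
    exact ((hG.notMem_matching_iff hF _).mp hτ).1
  · rw [hG.right_apply_corner, Sym2.eq_swap, hG.commute.eq]
    exact ((hG.notMem_matching_iff hF _).mp hσ).2

open Classical in
noncomputable def squareMate (F : Set (Sym2 V)) (σ τ μ : V → V) (v : V) : V :=
  if s(σ v, μ (σ v)) ∉ F then σ v else τ v

open Classical in
noncomputable def matchingIn (F : Set (Sym2 V)) (σ τ μ : V → V) (v : V) : V :=
  if s(v, μ v) ∈ F then μ v else squareMate F σ τ μ v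

lemma matchingIn_of_mem {v : V} (hv : s(v, μ v) ∈ F) : matchingIn F σ τ μ v = μ v :=
  if_pos hv

lemma matchingIn_of_notMem {v : V} (hv : s(v, μ v) ∉ F) :
    matchingIn F σ τ μ v = squareMate F σ τ μ v :=
  if_neg hv

lemma squareMate_spec (hG : IsSquaresAndMatching G σ τ μ) (hF : Is2Factor G F) {v : V}
    (hv : s(v, μ v) ∉ F) :
    s(squareMate F σ τ μ v, μ (squareMate F σ τ μ v)) ∉ F ∧
      squareMate F σ τ μ (squareMate F σ τ μ v) = v ∧ s(v, squareMate F σ τ μ v) ∈ F := by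
  obtain ⟨hvσ, hvτ⟩ := (hG.notMem_matching_iff hF v).mp hv
  by_cases hσ : s(σ v, μ (σ v)) ∉ F
  · have hmate : squareMate F σ τ μ v = σ v := if_pos hσ
    have hmate_σ : squareMate F σ τ μ (σ v) = v := by
      rw [squareMate, hG.involutive_left v, if_pos hv]
    rw [hmate, hmate_σ]
    exact ⟨hσ, rfl, hvσ⟩
  · have hτ := (hG.notMem_matching_left_or_right hF hv).resolve_left hσ
    have hcorner : ¬ s(σ (τ v), μ (σ (τ v))) ∉ F := fun h => by
      have := hG.notMem_matching_corner hF h (by rwa [hG.involutive_right])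
      rw [hG.involutive_right] at this
      exact hσ this
    have hmate : squareMate F σ τ μ v = τ v := if_neg hσ
    have hmate_τ : squareMate F σ τ μ (τ v) = v := by
      rw [squareMate, if_neg hcorner, hG.involutive_right v]
    rw [hmate, hmate_τ]
    exact ⟨hτ, rfl, hvτ⟩

lemma involutive_matchingIn (hG : IsSquaresAndMatching G σ τ μ) (hF : Is2Factor G F) :
    Involutive (matchingIn F σ τ μ) := by
  intro v
  by_cases hv : s(v, μ v) ∈ F
  · have hμv : s(μ v, μ (μ v)) ∈ F := by rwa [hG.involutive_matching, Sym2.eq_swap]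
    rw [matchingIn_of_mem hv, matchingIn_of_mem hμv, hG.involutive_matching v]
  · obtain ⟨hmate, hmate_mate, -⟩ := hG.squareMate_spec hF hv
    rw [matchingIn_of_notMem hv, matchingIn_of_notMem hmate, hmate_mate]

lemma mk_matchingIn_mem (hG : IsSquaresAndMatching G σ τ μ) (hF : Is2Factor G F) (v : V) :
    s(v, matchingIn F σ τ μ v) ∈ F := by
  by_cases hv : s(v, μ v) ∈ F
  · rwa [matchingIn_of_mem hv]
  · rw [matchingIn_of_notMem hv]
    exact (hG.squareMate_spec hF hv).2.2

theorem isE2F (hG : IsSquaresAndMatching G σ τ μ) : IsE2F G := fun _ hF =>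
  hF.hasOnlyEvenCycles_of_involutive (hG.involutive_matchingIn hF) (hG.mk_matchingIn_mem hF)

end IsSquaresAndMatching

section TwoSwitch

variable {α : Type*} [DecidableEq α] {g : α → α} {a b : α}

/-- Replaces the pairs `{a, g a}`, `{b, g b}` of the involution `g` by `{a, b}`, `{g a, g b}`. -/
def twoSwitch (g : α → α) (a b x : α) : α :=
  if x = a then b else if x = b then a else if x = g a then g b else if x = g b then g a else g x

lemma involutive_twoSwitch (hg : Involutive g) (hab : a ≠ b) (hagb : a ≠ g b) (ha : g a ≠ a)
    (hb : g b ≠ b) : Involutive (twoSwitch g a b) := by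
  intro x
  unfold twoSwitch
  split_ifs <;> grind [Involutive]

lemma twoSwitch_apply_left (g : α → α) (a b : α) : twoSwitch g a b a = b := if_pos rfl

lemma twoSwitch_apply_image_left (ha : g a ≠ a) (hb : g a ≠ b) :
    twoSwitch g a b (g a) = g b := by
  simp [twoSwitch, ha, hb]

lemma twoSwitch_apply_of_ne {x : α} (ha : x ≠ a) (hb : x ≠ b) (hga : x ≠ g a) (hgb : x ≠ g b) :
    twoSwitch g a b x = g x := by
  simp [twoSwitch, ha, hb, hga, hgb]

end TwoSwitch

lemma Function.Involutive.eq_apply_of_mk_eq {α : Type*} {f : α → α} (hf : Involutive f) {v w x : α}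
    (h : s(v, w) = s(x, f x)) : w = f v := by
  rcases Sym2.eq_iff.mp h with ⟨rfl, rfl⟩ | ⟨rfl, rfl⟩
  · rfl
  · exact (hf _).symm

namespace Papillon

def parity (n : ℕ) : ZMod (2 * n) →+* ZMod 2 :=
  ZMod.castHom (Dvd.intro n rfl) (ZMod 2)

@[simp] lemma parity_two (n : ℕ) : parity n 2 = 0 := map_ofNat (parity n) 2

@[simp] lemma parity_three (n : ℕ) : parity n 3 = 1 := map_ofNat (parity n) 3

lemma parity_eq_zero_of_ne_one {n : ℕ} {x : ZMod (2 * n)} (hx : parity n x ≠ 1) :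
    parity n x = 0 := by
  generalize parity n x = y at hx
  revert y; decide

lemma ne_of_parity_ne {n : ℕ} {x y : ZMod (2 * n)} (h : parity n x ≠ parity n y) : x ≠ y :=
  fun hxy => h (congrArg _ hxy)

lemma two_mul_natCast_eq_iff {n i j : ℕ} (hi : i < n) (hj : j < n) :
    (2 * i : ZMod (2 * n)) = 2 * j ↔ i = j := by
  have h := ZMod.natCast_eq_natCast_iff' (2 * i) (2 * j) (2 * n)
  rw [Nat.mod_eq_of_lt (by omega), Nat.mod_eq_of_lt (by omega)] at h
  push_cast at h
  rw [h]
  omega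

lemma two_mul_natCast_ne_zero {n i : ℕ} (h0 : 0 < i) (hi : i < n) :
    (2 * i : ZMod (2 * n)) ≠ 0 := by
  simpa using (two_mul_natCast_eq_iff hi (by omega : 0 < n)).not.mpr h0.ne'

def oddShift (n : ℕ) (k x : ZMod (2 * n)) : ZMod (2 * n) :=
  if parity n x = 1 then x + k else x - k

lemma parity_oddShift {n : ℕ} {k : ZMod (2 * n)} (hk : parity n k = 1) (x : ZMod (2 * n)) :
    parity n (oddShift n k x) = parity n x + 1 := by
  unfold oddShift
  split_ifs with hx
  · simp [hx, hk]
  · simp [parity_eq_zero_of_ne_one hx, hk]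

lemma oddShift_ne_self {n : ℕ} {k : ZMod (2 * n)} (hk : parity n k = 1) (x : ZMod (2 * n)) :
    oddShift n k x ≠ x := fun h => by
  simpa [h] using parity_oddShift hk x

lemma oddShift_ne_oddShift {n : ℕ} {k k' : ZMod (2 * n)} (hkk' : k ≠ k') (x : ZMod (2 * n)) :
    oddShift n k x ≠ oddShift n k' x := by
  unfold oddShift
  split_ifs
  · exact fun h => hkk' (add_left_cancel h)
  · exact fun h => hkk' (sub_right_injective h)

lemma involutive_oddShift {n : ℕ} {k : ZMod (2 * n)} (hk : parity n k = 1) :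
    Involutive (oddShift n k) := by
  intro x
  have h := parity_oddShift hk x
  rw [oddShift, h]
  unfold oddShift
  by_cases hx : parity n x = 1
  · simp [hx, CharTwo.add_self_eq_zero]
  · simp [parity_eq_zero_of_ne_one hx]

/-- Swaps `u_{2i-1} ↔ u_{2i}` and `v_{2i-1} ↔ v_{2i}`. -/
def pairSwap (n : ℕ) (v : PapVert (2 * n)) : PapVert (2 * n) := (v.1, oddShift n 1 v.2)

def spoke (n : ℕ) (v : PapVert (2 * n)) : PapVert (2 * n) := (!v.1, v.2)

/-- Without its two exceptional edges, the inner cycle would pair `v_x ↔ v_{x+3}` for odd `x`;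
`P_{r,ℓ}` replaces the chords at `x = 2s - 1` and `x = -1` by `v_{2s-1} v_{-1}` and
`v_{2s+2} v_2` (indices mod `2(r+ℓ)`). -/
def innerLink (r l : ℕ) : ZMod (2 * (r + l)) → ZMod (2 * (r + l)) :=
  twoSwitch (oddShift (r + l) 3) (2 * (min r l : ℕ) - 1) (-1)

def link (r l : ℕ) : PapVert (2 * (r + l)) → PapVert (2 * (r + l))
  | (false, x) => (false, oddShift (r + l) (-1) x)
  | (true, x) => (true, innerLink r l x)

lemma involutive_pairSwap (n : ℕ) : Involutive (pairSwap n) := by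
  rintro ⟨b, x⟩
  simp [pairSwap, involutive_oddShift (by simp : parity n 1 = 1) x]

lemma involutive_spoke (n : ℕ) : Involutive (spoke n) := by
  rintro ⟨b, x⟩
  simp [spoke]

lemma involutive_innerLink {r l : ℕ} (hr : 1 ≤ r) (hl : 1 ≤ l) : Involutive (innerLink r l) := by
  have h3 : parity (r + l) 3 = 1 := parity_three _
  refine involutive_twoSwitch (involutive_oddShift h3) ?_ ?_ (oddShift_ne_self h3 _)
    (oddShift_ne_self h3 _)
  · intro h
    exact two_mul_natCast_ne_zero (n := r + l) (i := min r l) (by omega) (by omega)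
      (by linear_combination h)
  · exact ne_of_parity_ne (by simp [parity_oddShift h3])

lemma involutive_link {r l : ℕ} (hr : 1 ≤ r) (hl : 1 ≤ l) : Involutive (link r l) := by
  rintro ⟨_ | _, x⟩
  · simp [link, involutive_oddShift (by simp : parity (r + l) (-1) = 1) x]
  · simp [link, involutive_innerLink hr hl x]

lemma innerLink_eq_or_parity_eq {r l : ℕ} (x : ZMod (2 * (r + l))) :
    innerLink r l x = oddShift (r + l) 3 x ∨
      parity (r + l) (innerLink r l x) = parity (r + l) x := by
  have h3 : parity (r + l) 3 = 1 := parity_three _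
  unfold innerLink twoSwitch
  split_ifs with h₁ h₂ h₃ h₄ <;> subst_vars <;> simp [parity_oddShift h3]

lemma pairSwap_ne_link {r l : ℕ} (hr : 1 ≤ r) (hl : 1 ≤ l) (v : PapVert (2 * (r + l))) :
    pairSwap (r + l) v ≠ link r l v := by
  have h2 : (2 : ZMod (2 * (r + l))) ≠ 0 := by
    simpa using two_mul_natCast_ne_zero (n := r + l) (i := 1) one_pos (by omega)
  rcases v with ⟨_ | _, x⟩
  · simpa [pairSwap, link] using
      oddShift_ne_oddShift (fun h => h2 (by linear_combination h)) x
  · simp only [pairSwap, link, ne_eq, Prod.mk.injEq, true_and]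
    rcases innerLink_eq_or_parity_eq x with h | h
    · rw [h]
      exact oddShift_ne_oddShift (fun h => h2 (by linear_combination -h)) x
    · intro h'
      have := parity_oddShift (by simp : parity (r + l) 1 = 1) x
      rw [h', h] at this
      simp at this

lemma innerLink_two_mul_add_two {r l i : ℕ} (hi1 : 1 ≤ i) (hi2 : i ≤ r + l - 1)
    (his : i ≠ min r l) : innerLink r l (2 * i + 2) = 2 * i - 1 := by
  have hi : (2 * i : ZMod (2 * (r + l))) ≠ 2 * (min r l : ℕ) :=
    (two_mul_natCast_eq_iff (by omega) (by omega)).not.mpr his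
  have hi0 : (2 * i : ZMod (2 * (r + l))) ≠ 0 := two_mul_natCast_ne_zero (by omega) (by omega)
  rw [innerLink, twoSwitch_apply_of_ne (ne_of_parity_ne (by simp)) (ne_of_parity_ne (by simp))
    (fun h => hi ?_) (fun h => hi0 ?_)]
  · simp [oddShift]
    ring
  · simp [oddShift] at h
    linear_combination h
  · simp [oddShift] at h
    linear_combination h

lemma innerLink_two_mul_min_add_two {r l : ℕ} :
    innerLink r l (2 * (min r l : ℕ) + 2) = 2 := by
  have h3 : parity (r + l) 3 = 1 := parity_three _
  have hga : (2 * (min r l : ℕ) + 2 : ZMod (2 * (r + l))) =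
      oddShift (r + l) 3 (2 * (min r l : ℕ) - 1) := by
    simp [oddShift]
    ring
  rw [innerLink, hga, twoSwitch_apply_image_left (oddShift_ne_self h3 _)
    (ne_of_parity_ne (by simp [parity_oddShift h3]))]
  simp [oddShift]
  norm_num

lemma mem_papillonEdges {r l : ℕ} (hr : 1 ≤ r) (hl : 1 ≤ l) {e : Sym2 (PapVert (2 * (r + l)))}
    (he : e ∈ papillonEdges r l) :
    ∃ v, e = s(v, pairSwap (r + l) v) ∨ e = s(v, spoke (r + l) v) ∨ e = s(v, link r l v) := by
  rcases he with ⟨i, hi1, hi2, rfl⟩ | rfl | ⟨i, hi1, hi2, rfl⟩ | ⟨i, hi1, hi2, rfl⟩ |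
    ⟨i, hi1, hi2, his, rfl⟩ | rfl | rfl
  · rcases Nat.even_or_odd i with hi | hi
    · have : link r l (pu _ i) = pu _ (i + 1) := by
        simp [link, pu, oddShift, ZMod.natCast_eq_one_iff_odd,
          Nat.not_odd_iff_even.mpr hi]
      exact ⟨_, Or.inr (Or.inr (by rw [this]))⟩
    · have : pairSwap (r + l) (pu _ i) = pu _ (i + 1) := by
        simp [pairSwap, pu, oddShift, ZMod.natCast_eq_one_iff_odd, hi]
      exact ⟨_, Or.inl (by rw [this])⟩
  · have : link r l (pu _ 1) = pu _ (2 * (r + l)) := by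
      simp [link, pu, oddShift]
    exact ⟨_, Or.inr (Or.inr (by rw [this, Sym2.eq_swap]))⟩
  · exact ⟨pu _ i, Or.inr (Or.inl rfl)⟩
  · have : pairSwap (r + l) (pv _ (2 * i)) = pv _ (2 * i - 1) := by
      simp [pairSwap, pv, oddShift, Nat.cast_sub (by omega : 1 ≤ 2 * i)]
    exact ⟨_, Or.inl (by rw [this, Sym2.eq_swap])⟩
  · have : link r l (pv _ (2 * i + 2)) = pv _ (2 * i - 1) := by
      simp only [link, pv, Prod.mk.injEq, true_and]
      push_cast [Nat.cast_sub (by omega : 1 ≤ 2 * i)]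
      exact innerLink_two_mul_add_two hi1 hi2 his
    exact ⟨_, Or.inr (Or.inr (by rw [this, Sym2.eq_swap]))⟩
  · have : link r l (pv _ (2 * min r l + 2)) = pv _ 2 := by
      simp only [link, pv, Prod.mk.injEq, true_and]
      push_cast
      exact innerLink_two_mul_min_add_two
    exact ⟨_, Or.inr (Or.inr (by rw [this, Sym2.eq_swap]))⟩
  · have : link r l (pv _ (2 * min r l - 1)) = pv _ (2 * (r + l) - 1) := by
      simp [link, pv, innerLink, Nat.cast_sub (by omega : 1 ≤ 2 * min r l),
        Nat.cast_sub (by omega : 1 ≤ 2 * (r + l)), twoSwitch_apply_left]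
    exact ⟨_, Or.inr (Or.inr (by rw [this]))⟩

lemma isSquaresAndMatching {r l : ℕ} (hr : 1 ≤ r) (hl : 1 ≤ l) :
    IsSquaresAndMatching (papillon r l) (pairSwap (r + l)) (spoke (r + l)) (link r l) where
  involutive_left := involutive_pairSwap _
  involutive_right := involutive_spoke _
  involutive_matching := involutive_link hr hl
  commute _ := rfl
  adj v w hvw := by
    rw [papillon, fromEdgeSet_adj] at hvw
    obtain ⟨x, hx | hx | hx⟩ := mem_papillonEdges hr hl hvw.1
    · exact Or.inl ((involutive_pairSwap _).eq_apply_of_mk_eq hx)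
    · exact Or.inr (Or.inl ((involutive_spoke _).eq_apply_of_mk_eq hx))
    · exact Or.inr (Or.inr ((involutive_link hr hl).eq_apply_of_mk_eq hx))
  left_ne_right v h := by simpa [pairSwap, spoke] using congrArg Prod.fst h
  left_ne_matching := pairSwap_ne_link hr hl
  right_ne_matching := by
    rintro ⟨_ | _, x⟩ h <;> simpa [spoke, link] using congrArg Prod.fst h

end Papillon

/-- Every papillon graph `P_{r,ℓ}` is even-2-factorable: every 2-factor of `P_{r,ℓ}`
contains only cycles of even length. -/
theorem statement8 (r l : ℕ) (hr : 1 ≤ r) (hl : 1 ≤ l) : IsE2F (papillon r l) :=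
  (Papillon.isSquaresAndMatching hr hl).isE2F
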